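/- Let α ∈ (1.26, 1.71), λ ≥ 0, h > 0, let k ≥ 5 be an integer, and let γ₄ be real with γ₄ ≥ (α⁵/8 + α⁴/3 − 67α³/24 − 23α²/6 + 175α/6 − 30)/(α³+6α²+11α+6). Then the third-order tempered-WSGD weight g_{k,λ} = (γ₁ω_k^(α) + γ₂ω_{k−1}^(α) + γ₃ω_{k−2}^(α) + γ₄ω_{k−3}^(α))e^{−(k−1)hλ} satisfies g_{k,λ} ≥ 0. -/

import Mathlib

/-!
Write `m = k - 3`. The Grünwald weights satisfy `(j + 1) ω_{j+1} = (j - α) ω_j`, so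
`(m+1)(m+2)(m+3) · (γ₁ω_{m+3} + γ₂ω_{m+2} + γ₃ω_{m+1} + γ₄ω_m)` is `ω_m` times a cubic in `m`, and
`ω_m > 0` for `m ≥ 2` when `1 < α < 2`. In `x = m - 2` the cubic is
`(γ₄(α+1)(α+2)(α+3) - N(α)) + x · Q(x)`, where `N(α)` is the numerator in the bound on `γ₄` and the
quadratic `Q` has nonnegative coefficients for `0 ≤ α ≤ 2`.
-/

open Finset

noncomputable section

/-- The Grünwald weight `ω_j^(α) = (-1)^j binom(α, j)`. -/
def grunwaldWeight (α : ℝ) (j : ℕ) : ℝ :=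
  (-1 : ℝ) ^ j * (∏ i ∈ range j, (α - (i : ℝ))) / (j.factorial : ℝ)

/-- The cubic `P` with `(m+1)(m+2)(m+3) (γ₁ω_{m+3} + γ₂ω_{m+2} + γ₃ω_{m+1} + γ₄ω_m) = ω_m P(m)`. -/
def weightCubic (α γ₁ γ₂ γ₃ γ₄ m : ℝ) : ℝ :=
  γ₄ * (m + 1) * (m + 2) * (m + 3) + γ₃ * (m - α) * (m + 2) * (m + 3)
    + γ₂ * (m - α) * (m + 1 - α) * (m + 3) + γ₁ * (m - α) * (m + 1 - α) * (m + 2 - α)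

end

theorem grunwaldWeight_succ_mul (α : ℝ) (j : ℕ) :
    ((j : ℝ) + 1) * grunwaldWeight α (j + 1) = ((j : ℝ) - α) * grunwaldWeight α j := by
  have hfac : (j.factorial : ℝ) ≠ 0 := by exact_mod_cast j.factorial_ne_zero
  unfold grunwaldWeight
  rw [prod_range_succ, Nat.factorial_succ]
  push_cast
  field_simp
  ring

theorem grunwaldWeight_two (α : ℝ) : grunwaldWeight α 2 = α * (α - 1) / 2 := by
  simp [grunwaldWeight, prod_range_succ, Nat.factorial]

theorem grunwaldWeight_pos {α : ℝ} (h1 : 1 < α) (h2 : α < 2) :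
    ∀ j, 2 ≤ j → 0 < grunwaldWeight α j := by
  refine Nat.le_induction ?_ fun j hj ih => ?_
  · rw [grunwaldWeight_two]
    nlinarith
  · have hj' : (2 : ℝ) ≤ j := by exact_mod_cast hj
    have : 0 < ((j : ℝ) + 1) * grunwaldWeight α (j + 1) := by
      rw [grunwaldWeight_succ_mul]
      exact mul_pos (by linarith) ih
    exact pos_of_mul_pos_right this (by positivity)

theorem grunwaldWeight_combination_mul (α γ₁ γ₂ γ₃ γ₄ : ℝ) (m : ℕ) :
    ((m : ℝ) + 1) * (m + 2) * (m + 3) *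
        (γ₁ * grunwaldWeight α (m + 3) + γ₂ * grunwaldWeight α (m + 2)
          + γ₃ * grunwaldWeight α (m + 1) + γ₄ * grunwaldWeight α m) =
      grunwaldWeight α m * weightCubic α γ₁ γ₂ γ₃ γ₄ m := by
  have r0 := grunwaldWeight_succ_mul α m
  have r1 := grunwaldWeight_succ_mul α (m + 1)
  have r2 := grunwaldWeight_succ_mul α (m + 2)
  push_cast at r1 r2
  unfold weightCubic
  linear_combination
    γ₁ * ((m + 1) * (m + 2) * r2 + (m + 1) * (m + 2 - α) * r1 + (m + 1 - α) * (m + 2 - α) * r0)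
      + γ₂ * ((m + 1) * (m + 3) * r1 + (m + 1 - α) * (m + 3) * r0)
      + γ₃ * ((m + 2) * (m + 3) * r0)

theorem grunwaldWeight_combination_nonneg {α γ₁ γ₂ γ₃ γ₄ : ℝ} {m : ℕ}
    (hω : 0 ≤ grunwaldWeight α m) (hP : 0 ≤ weightCubic α γ₁ γ₂ γ₃ γ₄ m) :
    0 ≤ γ₁ * grunwaldWeight α (m + 3) + γ₂ * grunwaldWeight α (m + 2)
      + γ₃ * grunwaldWeight α (m + 1) + γ₄ * grunwaldWeight α m := by
  have hd : (0 : ℝ) < ((m : ℝ) + 1) * (m + 2) * (m + 3) := by positivity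
  refine nonneg_of_mul_nonneg_right ?_ hd
  rw [grunwaldWeight_combination_mul]
  exact mul_nonneg hω hP

theorem weightCubic_thirdOrder (α γ₄ x : ℝ) :
    weightCubic α (α ^ 2 / 8 + 5 * α / 24 - γ₄) (-α ^ 2 / 4 + α / 12 + 1 + 3 * γ₄)
        (α ^ 2 / 8 - 7 * α / 24 - 3 * γ₄) γ₄ (x + 2) =
      (γ₄ * (α ^ 3 + 6 * α ^ 2 + 11 * α + 6)
          - (α ^ 5 / 8 + α ^ 4 / 3 - 67 * α ^ 3 / 24 - 23 * α ^ 2 / 6 + 175 * α / 6 - 30))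
        + x * (x ^ 2 + (10 - (α ^ 2 + 5 * α) / 2) * x
          + (31 - 217 * α / 12 - 9 * α ^ 2 / 8 + 13 * α ^ 3 / 12 + α ^ 4 / 8)) := by
  unfold weightCubic
  ring

theorem thirdOrder_quadratic_nonneg {α x : ℝ} (h0 : 0 ≤ α) (h2 : α ≤ 2) (hx : 0 ≤ x) :
    0 ≤ x ^ 2 + (10 - (α ^ 2 + 5 * α) / 2) * x
      + (31 - 217 * α / 12 - 9 * α ^ 2 / 8 + 13 * α ^ 3 / 12 + α ^ 4 / 8) := by
  have hb : 0 ≤ 10 - (α ^ 2 + 5 * α) / 2 := by nlinarith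
  have hc : 0 ≤ 31 - 217 * α / 12 - 9 * α ^ 2 / 8 + 13 * α ^ 3 / 12 + α ^ 4 / 8 := by
    nlinarith [mul_nonneg h0 (sub_nonneg.2 h2), sq_nonneg (α - 2), pow_nonneg h0 3,
      pow_nonneg h0 4]
  positivity

theorem weightCubic_thirdOrder_nonneg {α γ₄ x : ℝ} (h0 : 0 ≤ α) (h2 : α ≤ 2) (hx : 0 ≤ x)
    (hγ₄ : (α ^ 5 / 8 + α ^ 4 / 3 - 67 * α ^ 3 / 24 - 23 * α ^ 2 / 6 + 175 * α / 6 - 30) /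
        (α ^ 3 + 6 * α ^ 2 + 11 * α + 6) ≤ γ₄) :
    0 ≤ weightCubic α (α ^ 2 / 8 + 5 * α / 24 - γ₄) (-α ^ 2 / 4 + α / 12 + 1 + 3 * γ₄)
        (α ^ 2 / 8 - 7 * α / 24 - 3 * γ₄) γ₄ (x + 2) := by
  have hD : 0 < α ^ 3 + 6 * α ^ 2 + 11 * α + 6 := by positivity
  rw [weightCubic_thirdOrder]
  exact add_nonneg (sub_nonneg.2 ((div_le_iff₀ hD).mp hγ₄))
    (mul_nonneg hx (thirdOrder_quadratic_nonneg h0 h2 hx))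

theorem third_order_weights_gk_nonneg_general
    (α lam h γ₁ γ₂ γ₃ γ₄ : ℝ) (hα1 : 1.26 < α) (hα2 : α < 1.71)
    (k : ℕ) (hk : 5 ≤ k)
    (hγ₄ : (α ^ 5 / 8 + α ^ 4 / 3 - 67 * α ^ 3 / 24 - 23 * α ^ 2 / 6 + 175 * α / 6 - 30) /
        (α ^ 3 + 6 * α ^ 2 + 11 * α + 6) ≤ γ₄)
    (hγ₁ : γ₁ = α ^ 2 / 8 + 5 * α / 24 - γ₄)
    (hγ₂ : γ₂ = -α ^ 2 / 4 + α / 12 + 1 + 3 * γ₄)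
    (hγ₃ : γ₃ = α ^ 2 / 8 - 7 * α / 24 - 3 * γ₄)
    (ω : ℕ → ℝ)
    (hω : ∀ j : ℕ, ω j =
      (-1 : ℝ) ^ j * (∏ i ∈ Finset.range j, (α - (i : ℝ))) / (Nat.factorial j : ℝ))
    (gk : ℝ)
    (hgk : gk = (γ₁ * ω k + γ₂ * ω (k - 1) + γ₃ * ω (k - 2) + γ₄ * ω (k - 3)) *
        Real.exp (-((k : ℝ) - 1) * h * lam)) :
    0 ≤ gk := by
  have h1 : 1 < α := by norm_num at hα1; linarith
  have h2 : α < 2 := by norm_num at hα2; linarith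
  obtain ⟨n, rfl⟩ : ∃ n, k = n + 5 := ⟨k - 5, by omega⟩
  obtain rfl : ω = grunwaldWeight α := funext hω
  subst hgk hγ₁ hγ₂ hγ₃
  refine mul_nonneg ?_ (Real.exp_nonneg _)
  rw [show n + 5 - 1 = n + 2 + 2 by omega, show n + 5 - 2 = n + 2 + 1 by omega,
    show n + 5 - 3 = n + 2 by omega]
  refine grunwaldWeight_combination_nonneg (grunwaldWeight_pos h1 h2 _ le_add_self).le ?_
  rw [Nat.cast_add, Nat.cast_two]
  exact weightCubic_thirdOrder_nonneg (by linarith) h2.le n.cast_nonneg hγ₄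

/-- for `α ∈ (1.26, 1.71)`, `k ≥ 5` and
`γ₄ ≥ (α⁵/8 + α⁴/3 − 67α³/24 − 23α²/6 + 175α/6 − 30)/(α³+6α²+11α+6)`, the weight
`g_k = (γ₁ω_k + γ₂ω_{k−1} + γ₃ω_{k−2} + γ₄ω_{k−3})e^{−(k−1)hλ}` is nonnegative. -/
theorem third_order_weights_gk_nonneg
    (α lam h γ₁ γ₂ γ₃ γ₄ : ℝ) (hα1 : 1.26 < α) (hα2 : α < 1.71)
    (hlam : 0 ≤ lam) (hh : 0 < h)
    (k : ℕ) (hk : 5 ≤ k)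
    (hγ₄ : (α ^ 5 / 8 + α ^ 4 / 3 - 67 * α ^ 3 / 24 - 23 * α ^ 2 / 6 + 175 * α / 6 - 30) /
        (α ^ 3 + 6 * α ^ 2 + 11 * α + 6) ≤ γ₄)
    (hγ₁ : γ₁ = α ^ 2 / 8 + 5 * α / 24 - γ₄)
    (hγ₂ : γ₂ = -α ^ 2 / 4 + α / 12 + 1 + 3 * γ₄)
    (hγ₃ : γ₃ = α ^ 2 / 8 - 7 * α / 24 - 3 * γ₄)
    (ω : ℕ → ℝ)
    (hω : ∀ j : ℕ, ω j =
      (-1 : ℝ) ^ j * (∏ i ∈ Finset.range j, (α - (i : ℝ))) / (Nat.factorial j : ℝ))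
    (gk : ℝ)
    (hgk : gk = (γ₁ * ω k + γ₂ * ω (k - 1) + γ₃ * ω (k - 2) + γ₄ * ω (k - 3)) *
        Real.exp (-((k : ℝ) - 1) * h * lam)) :
    0 ≤ gk :=
  third_order_weights_gk_nonneg_general α lam h γ₁ γ₂ γ₃ γ₄ hα1 hα2 k hk hγ₄ hγ₁ hγ₂ hγ₃ ω hω gk hgk
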